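/- Under the stated setup and algorithmic hypotheses, A^{k+1} − A^k → 0 and Z^{k+1} − Z^k → 0 as k → ∞ (convergence in ℝ^{n×n} with the Frobenius norm). -/

import Mathlib

open Matrix BigOperators Filter Topology

/-- Frobenius norm of a real matrix. -/
noncomputable def frob {m n : ℕ} (W : Matrix (Fin m) (Fin n) ℝ) : ℝ :=
  Real.sqrt (∑ i, ∑ j, (W i j) ^ 2)

/-- Laplacian `L_S = D_S - (|S| + |S|ᵀ)/2` of a square real matrix `S`. -/
noncomputable def lap {n : ℕ} (S : Matrix (Fin n) (Fin n) ℝ) : Matrix (Fin n) (Fin n) ℝ :=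
  Matrix.diagonal (fun i => ∑ j, (|S i j| + |S j i|) / 2)
    - (1 / 2 : ℝ) • (S.map (fun x => |x|) + (S.map (fun x => |x|))ᵀ)

/-- The objective `f(A, Z, H)` of the penalized DGSL model. -/
noncomputable def fObj {n k d : ℕ} (X : Matrix (Fin d) (Fin n) ℝ)
    (W M C : Matrix (Fin n) (Fin n) ℝ) (lam lamZ lamM a1 a2 : ℝ)
    (A Z : Matrix (Fin n) (Fin n) ℝ) (H : Matrix (Fin k) (Fin n) ℝ) : ℝ :=
  (1 / 2) * frob (X - X * A) ^ 2 + (lam / 2) * frob (A - Z) ^ 2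
    + lamZ * (∑ i, ∑ j, |Z i j|)
    + a1 * trace (H * lap Z * Hᵀ) / trace (H * lap C * Hᵀ)
    + a2 * trace (H * (lap W + lamM • lap M) * Hᵀ) / trace (H * lap C * Hᵀ)

/-! Both blocks of the objective are strongly convex with modulus `λ`: in `A` through
`(λ/2)‖A - Z‖²` on top of a convex quadratic, and in `Z` through the same coupling term on top
of `λ_Z‖Z‖₁` and `Tr(H L_Z Hᵀ) = ¼ Σₚ Σᵢⱼ (|zᵢⱼ| + |zⱼᵢ|)(hₚᵢ - hₚⱼ)²`, which is convex in `Z`.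
Comparing each block minimiser with the midpoint of the old and new iterate therefore gives the
sufficient decrease `λ/4 (‖Aᵏ⁺¹ - Aᵏ‖² + ‖Zᵏ⁺¹ - Zᵏ‖²) ≤ f(Aᵏ, Zᵏ, Hᵏ⁺¹) - f(Aᵏ⁺¹, Zᵏ⁺¹, Hᵏ⁺²)`.
Every `Tr(H L_S Hᵀ)` is nonnegative, so `f ≥ 0` and the decreases are summable; hence the
steps tend to zero. -/

theorem dotProduct_diagonal_sub_mulVec {ι : Type*} [Fintype ι] [DecidableEq ι]
    (B : Matrix ι ι ℝ) (hB : B.IsSymm) (x : ι → ℝ) :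
    x ⬝ᵥ ((diagonal (fun i => ∑ j, B i j) - B) *ᵥ x)
      = (∑ i, ∑ j, B i j * (x i - x j) ^ 2) / 2 := by
  have hdiag : x ⬝ᵥ (diagonal (fun i => ∑ j, B i j) *ᵥ x) = ∑ i, ∑ j, B i j * x i ^ 2 := by
    simp only [dotProduct, mulVec_diagonal, Finset.sum_mul, Finset.mul_sum]
    exact Finset.sum_congr rfl fun i _ => Finset.sum_congr rfl fun j _ => by ring
  have hoff : x ⬝ᵥ (B *ᵥ x) = ∑ i, ∑ j, B i j * (x i * x j) := by
    simp only [dotProduct, mulVec, Finset.mul_sum]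
    exact Finset.sum_congr rfl fun i _ => Finset.sum_congr rfl fun j _ => by ring
  have hswap : ∑ i, ∑ j, B i j * x j ^ 2 = ∑ i, ∑ j, B i j * x i ^ 2 := by
    rw [Finset.sum_comm]
    exact Finset.sum_congr rfl fun i _ => Finset.sum_congr rfl fun j _ => by
      rw [hB.apply]
  have hexp : ∑ i, ∑ j, B i j * (x i - x j) ^ 2
      = ∑ i, ∑ j, B i j * x i ^ 2 + ∑ i, ∑ j, B i j * x j ^ 2
        - 2 * ∑ i, ∑ j, B i j * (x i * x j) := by
    simp only [Finset.mul_sum, ← Finset.sum_add_distrib, ← Finset.sum_sub_distrib]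
    exact Finset.sum_congr rfl fun i _ => Finset.sum_congr rfl fun j _ => by ring
  rw [sub_mulVec, dotProduct_sub, hdiag, hoff, hexp, hswap]
  ring

theorem trace_mul_mul_transpose {ι κ : Type*} [Fintype ι] [Fintype κ]
    (H : Matrix κ ι ℝ) (L : Matrix ι ι ℝ) :
    trace (H * L * Hᵀ) = ∑ p, H p ⬝ᵥ (L *ᵥ H p) := by
  simp only [trace, diag, mul_apply, transpose_apply, dotProduct, mulVec, Finset.sum_mul,
    Finset.mul_sum]
  refine Finset.sum_congr rfl fun p _ => ?_
  rw [Finset.sum_comm]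
  exact Finset.sum_congr rfl fun i _ => Finset.sum_congr rfl fun j _ => by ring

theorem lap_eq_diagonal_sub {n : ℕ} (Z : Matrix (Fin n) (Fin n) ℝ) :
    lap Z = diagonal (fun i => ∑ j, (|Z i j| + |Z j i|) / 2)
      - of (fun i j => (|Z i j| + |Z j i|) / 2) := by
  ext i j
  simp [lap, Matrix.sub_apply, Matrix.add_apply]
  ring

theorem trace_lap {n k : ℕ} (H : Matrix (Fin k) (Fin n) ℝ) (Z : Matrix (Fin n) (Fin n) ℝ) :
    trace (H * lap Z * Hᵀ)
      = ∑ p, (∑ i, ∑ j, (|Z i j| + |Z j i|) / 2 * (H p i - H p j) ^ 2) / 2 := by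
  have hsymm : (of fun i j => (|Z i j| + |Z j i|) / 2).IsSymm := by
    ext i j; simp [add_comm]
  simp_rw [trace_mul_mul_transpose, lap_eq_diagonal_sub]
  exact Finset.sum_congr rfl fun p _ => dotProduct_diagonal_sub_mulVec _ hsymm _

theorem trace_lap_nonneg {n k : ℕ} (H : Matrix (Fin k) (Fin n) ℝ)
    (Z : Matrix (Fin n) (Fin n) ℝ) : 0 ≤ trace (H * lap Z * Hᵀ) := by
  rw [trace_lap]
  positivity

theorem abs_half_smul_add_apply_le {m n : ℕ} (Z Z' : Matrix (Fin m) (Fin n) ℝ)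
    (i : Fin m) (j : Fin n) :
    |((1 / 2 : ℝ) • (Z + Z')) i j| ≤ (|Z i j| + |Z' i j|) / 2 := by
  rw [Matrix.smul_apply, Matrix.add_apply, smul_eq_mul, abs_mul, abs_of_pos one_half_pos]
  linarith [abs_add_le (Z i j) (Z' i j)]

theorem sum_abs_half_smul_add_le {m n : ℕ} (Z Z' : Matrix (Fin m) (Fin n) ℝ) :
    ∑ i, ∑ j, |((1 / 2 : ℝ) • (Z + Z')) i j|
      ≤ ((∑ i, ∑ j, |Z i j|) + ∑ i, ∑ j, |Z' i j|) / 2 := by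
  simp only [← Finset.sum_add_distrib, Finset.sum_div]
  gcongr with i _ j _
  exact abs_half_smul_add_apply_le Z Z' i j

theorem trace_lap_half_smul_add_le {n k : ℕ} (H : Matrix (Fin k) (Fin n) ℝ)
    (Z Z' : Matrix (Fin n) (Fin n) ℝ) :
    trace (H * lap ((1 / 2 : ℝ) • (Z + Z')) * Hᵀ)
      ≤ (trace (H * lap Z * Hᵀ) + trace (H * lap Z' * Hᵀ)) / 2 := by
  simp only [trace_lap, ← Finset.sum_add_distrib, Finset.sum_div, ← add_div]
  gcongr with p _ i _ j _
  have := abs_half_smul_add_apply_le Z Z' i j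
  have := abs_half_smul_add_apply_le Z Z' j i
  nlinarith [sq_nonneg (H p i - H p j)]

theorem frob_nonneg {m n : ℕ} (U : Matrix (Fin m) (Fin n) ℝ) : 0 ≤ frob U :=
  Real.sqrt_nonneg _

theorem frob_sq {m n : ℕ} (U : Matrix (Fin m) (Fin n) ℝ) :
    frob U ^ 2 = ∑ i, ∑ j, U i j ^ 2 :=
  Real.sq_sqrt (by positivity)

theorem frob_half_smul_add_sq {m n : ℕ} (U V : Matrix (Fin m) (Fin n) ℝ) :
    frob ((1 / 2 : ℝ) • (U + V)) ^ 2
      = frob U ^ 2 / 2 + frob V ^ 2 / 2 - frob (U - V) ^ 2 / 4 := by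
  simp only [frob_sq, Finset.sum_div, ← Finset.sum_sub_distrib, ← Finset.sum_add_distrib]
  refine Finset.sum_congr rfl fun i _ => Finset.sum_congr rfl fun j _ => ?_
  simp only [Matrix.smul_apply, Matrix.add_apply, Matrix.sub_apply, smul_eq_mul]
  ring

section Objective

variable {n k d : ℕ} {X : Matrix (Fin d) (Fin n) ℝ} {W M C : Matrix (Fin n) (Fin n) ℝ}
  {lam lamZ lamM a1 a2 : ℝ}

local notation "f" => fObj X W M C lam lamZ lamM a1 a2

theorem fObj_nonneg (hlam : 0 ≤ lam) (hlamZ : 0 ≤ lamZ) (hlamM : 0 ≤ lamM) (ha1 : 0 ≤ a1)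
    (ha2 : 0 ≤ a2) (A Z : Matrix (Fin n) (Fin n) ℝ) (H : Matrix (Fin k) (Fin n) ℝ) :
    0 ≤ f A Z H := by
  have hWM : 0 ≤ trace (H * (lap W + lamM • lap M) * Hᵀ) := by
    rw [Matrix.mul_add, Matrix.add_mul, trace_add, Matrix.mul_smul, Matrix.smul_mul,
      trace_smul, smul_eq_mul]
    have := trace_lap_nonneg H W
    have := trace_lap_nonneg H M
    positivity
  have := trace_lap_nonneg H Z
  have := trace_lap_nonneg H C
  unfold fObj
  positivity

theorem fObj_half_smul_add_left (A B Z : Matrix (Fin n) (Fin n) ℝ)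
    (H : Matrix (Fin k) (Fin n) ℝ) :
    f ((1 / 2 : ℝ) • (A + B)) Z H
      ≤ (f A Z H + f B Z H) / 2 - lam / 8 * frob (A - B) ^ 2 := by
  have hfit : X - X * ((1 / 2 : ℝ) • (A + B)) = (1 / 2 : ℝ) • ((X - X * A) + (X - X * B)) := by
    rw [Matrix.mul_smul, Matrix.mul_add]
    module
  have hcoupling : (1 / 2 : ℝ) • (A + B) - Z = (1 / 2 : ℝ) • ((A - Z) + (B - Z)) := by
    module
  have hfit_sq := frob_half_smul_add_sq (X - X * A) (X - X * B)
  have hcoupling_sq := frob_half_smul_add_sq (A - Z) (B - Z)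
  rw [← hfit, sub_sub_sub_cancel_left] at hfit_sq
  rw [← hcoupling, sub_sub_sub_cancel_right] at hcoupling_sq
  unfold fObj
  rw [hfit_sq, hcoupling_sq]
  linarith [sq_nonneg (frob (X * B - X * A))]

theorem fObj_half_smul_add_middle (hlamZ : 0 ≤ lamZ) (ha1 : 0 ≤ a1)
    (A Y Z : Matrix (Fin n) (Fin n) ℝ) (H : Matrix (Fin k) (Fin n) ℝ) :
    f A ((1 / 2 : ℝ) • (Y + Z)) H
      ≤ (f A Y H + f A Z H) / 2 - lam / 8 * frob (Y - Z) ^ 2 := by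
  have hcoupling : A - (1 / 2 : ℝ) • (Y + Z) = (1 / 2 : ℝ) • ((A - Z) + (A - Y)) := by
    module
  have hcoupling_sq := frob_half_smul_add_sq (A - Z) (A - Y)
  rw [← hcoupling, sub_sub_sub_cancel_left] at hcoupling_sq
  have hl1 := mul_le_mul_of_nonneg_left (sum_abs_half_smul_add_le Y Z) hlamZ
  have hgraph : a1 * trace (H * lap ((1 / 2 : ℝ) • (Y + Z)) * Hᵀ) / trace (H * lap C * Hᵀ)
      ≤ (a1 * trace (H * lap Y * Hᵀ) / trace (H * lap C * Hᵀ)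
        + a1 * trace (H * lap Z * Hᵀ) / trace (H * lap C * Hᵀ)) / 2 := by
    calc _ ≤ a1 * ((trace (H * lap Y * Hᵀ) + trace (H * lap Z * Hᵀ)) / 2)
          / trace (H * lap C * Hᵀ) :=
          div_le_div_of_nonneg_right (mul_le_mul_of_nonneg_left
            (trace_lap_half_smul_add_le H Y Z) ha1) (trace_lap_nonneg H C)
      _ = _ := by ring
  unfold fObj
  rw [hcoupling_sq]
  linarith

theorem fObj_sufficient_decrease_left {A A' Z : Matrix (Fin n) (Fin n) ℝ}
    {H : Matrix (Fin k) (Fin n) ℝ} (hmin : ∀ B, f A' Z H ≤ f B Z H) :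
    lam / 4 * frob (A' - A) ^ 2 ≤ f A Z H - f A' Z H := by
  have hmid : f ((1 / 2 : ℝ) • (A' + A)) Z H
      ≤ (f A' Z H + f A Z H) / 2 - lam / 8 * frob (A' - A) ^ 2 :=
    fObj_half_smul_add_left A' A Z H
  linarith [hmin ((1 / 2 : ℝ) • (A' + A))]

theorem fObj_sufficient_decrease_middle (hlamZ : 0 ≤ lamZ) (ha1 : 0 ≤ a1)
    {A Z Z' : Matrix (Fin n) (Fin n) ℝ} {H : Matrix (Fin k) (Fin n) ℝ}
    (hZ : ∀ i, Z i i = 0) (hZ' : ∀ i, Z' i i = 0)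
    (hmin : ∀ Y : Matrix (Fin n) (Fin n) ℝ, (∀ i, Y i i = 0) → f A Z' H ≤ f A Y H) :
    lam / 4 * frob (Z' - Z) ^ 2 ≤ f A Z H - f A Z' H := by
  have hmid_diag : ∀ i, ((1 / 2 : ℝ) • (Z' + Z)) i i = 0 := fun i => by
    simp [hZ i, hZ' i]
  have hmid : f A ((1 / 2 : ℝ) • (Z' + Z)) H
      ≤ (f A Z' H + f A Z H) / 2 - lam / 8 * frob (Z' - Z) ^ 2 :=
    fObj_half_smul_add_middle hlamZ ha1 A Z' Z H
  linarith [hmin _ hmid_diag]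

end Objective

theorem tendsto_zero_of_le_sub_succ {g e : ℕ → ℝ} {c : ℝ} (hc : 0 < c) (hg : ∀ t, 0 ≤ g t)
    (he : ∀ t, 0 ≤ e t) (hdec : ∀ t, c * e t ≤ g t - g (t + 1)) :
    Tendsto e atTop (𝓝 0) := by
  have hpartial : ∀ T, ∑ t ∈ Finset.range T, c * e t ≤ g 0 := fun T =>
    calc ∑ t ∈ Finset.range T, c * e t ≤ ∑ t ∈ Finset.range T, (g t - g (t + 1)) :=
          Finset.sum_le_sum fun t _ => hdec t
      _ = g 0 - g T := Finset.sum_range_sub' g T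
      _ ≤ g 0 := sub_le_self _ (hg T)
  have hsum : Summable fun t => c * e t :=
    summable_of_sum_range_le (fun t => mul_nonneg hc.le (he t)) hpartial
  simpa [hc.ne'] using (hsum.mul_left c⁻¹).tendsto_atTop_zero

theorem tendsto_zero_of_sq_add_sq {u v : ℕ → ℝ} (hu : ∀ t, 0 ≤ u t) (hv : ∀ t, 0 ≤ v t)
    (h : Tendsto (fun t => u t ^ 2 + v t ^ 2) atTop (𝓝 0)) :
    Tendsto u atTop (𝓝 0) ∧ Tendsto v atTop (𝓝 0) := by
  have hsqrt : Tendsto (fun t => √(u t ^ 2 + v t ^ 2)) atTop (𝓝 0) := by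
    simpa using h.sqrt
  constructor
  · refine squeeze_zero hu (fun t => Real.le_sqrt_of_sq_le ?_) hsqrt
    linarith [sq_nonneg (v t)]
  · refine squeeze_zero hv (fun t => Real.le_sqrt_of_sq_le ?_) hsqrt
    linarith [sq_nonneg (u t)]

theorem dgsl_successive_differences_tendsto_zero_general (n k d : ℕ)
    (X : Matrix (Fin d) (Fin n) ℝ) (W M C : Matrix (Fin n) (Fin n) ℝ)
    (lam lamZ lamM a1 a2 : ℝ) (hlam : 0 < lam) (hlamZ : 0 < lamZ)
    (hlamM : 0 < lamM) (ha1 : 0 < a1) (ha2 : 0 < a2)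
    (Aseq Zseq : ℕ → Matrix (Fin n) (Fin n) ℝ)
    (Hseq : ℕ → Matrix (Fin k) (Fin n) ℝ)
    (hZ0 : ∀ i, Zseq 0 i i = 0)
    (hHstep : ∀ t : ℕ, Hseq (t + 1) * (Hseq (t + 1))ᵀ = 1 ∧
      ∀ H : Matrix (Fin k) (Fin n) ℝ, H * Hᵀ = 1 →
        fObj X W M C lam lamZ lamM a1 a2 (Aseq t) (Zseq t) (Hseq (t + 1))
          ≤ fObj X W M C lam lamZ lamM a1 a2 (Aseq t) (Zseq t) H)
    (hAstep : ∀ (t : ℕ) (A : Matrix (Fin n) (Fin n) ℝ),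
      fObj X W M C lam lamZ lamM a1 a2 (Aseq (t + 1)) (Zseq t) (Hseq (t + 1))
        ≤ fObj X W M C lam lamZ lamM a1 a2 A (Zseq t) (Hseq (t + 1)))
    (hZstep : ∀ t : ℕ, (∀ i, Zseq (t + 1) i i = 0) ∧
      ∀ Z : Matrix (Fin n) (Fin n) ℝ, (∀ i, Z i i = 0) →
        fObj X W M C lam lamZ lamM a1 a2 (Aseq (t + 1)) (Zseq (t + 1)) (Hseq (t + 1))
          ≤ fObj X W M C lam lamZ lamM a1 a2 (Aseq (t + 1)) Z (Hseq (t + 1))) :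
    Tendsto (fun t : ℕ => frob (Aseq (t + 1) - Aseq t)) atTop (𝓝 0) ∧
    Tendsto (fun t : ℕ => frob (Zseq (t + 1) - Zseq t)) atTop (𝓝 0) := by
  set g : ℕ → ℝ := fun t => fObj X W M C lam lamZ lamM a1 a2 (Aseq t) (Zseq t) (Hseq (t + 1))
  have hZdiag : ∀ t i, Zseq t i i = 0
    | 0 => hZ0
    | t + 1 => (hZstep t).1
  have hdec : ∀ t, lam / 4 * (frob (Aseq (t + 1) - Aseq t) ^ 2
      + frob (Zseq (t + 1) - Zseq t) ^ 2) ≤ g t - g (t + 1) := fun t => by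
    have hA := fObj_sufficient_decrease_left (A := Aseq t) (hAstep t)
    have hZ := fObj_sufficient_decrease_middle hlamZ.le ha1.le (hZdiag t) (hZdiag (t + 1))
      (hZstep t).2
    have hH := (hHstep (t + 1)).2 _ (hHstep t).1
    simp only [g] at hH ⊢
    linarith
  refine tendsto_zero_of_sq_add_sq (fun _ => frob_nonneg _) (fun _ => frob_nonneg _) ?_
  exact tendsto_zero_of_le_sub_succ (by positivity)
    (fun _ => fObj_nonneg hlam.le hlamZ.le hlamM.le ha1.le ha2.le _ _ _)
    (fun _ => by positivity) hdec

theorem dgsl_successive_differences_tendsto_zero (n k d : ℕ) (hn : 0 < n) (hk : 0 < k) (hd : 0 < d)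
    (X : Matrix (Fin d) (Fin n) ℝ) (W M C : Matrix (Fin n) (Fin n) ℝ)
    (lam lamZ lamM a1 a2 : ℝ) (hlam : 0 < lam) (hlamZ : 0 < lamZ)
    (hlamM : 0 < lamM) (ha1 : 0 < a1) (ha2 : 0 < a2)
    (hC : ∀ H : Matrix (Fin k) (Fin n) ℝ, H * Hᵀ = 1 → 0 < trace (H * lap C * Hᵀ))
    (Aseq Zseq : ℕ → Matrix (Fin n) (Fin n) ℝ)
    (Hseq : ℕ → Matrix (Fin k) (Fin n) ℝ)
    (hZ0 : ∀ i, Zseq 0 i i = 0) (hH0 : Hseq 0 * (Hseq 0)ᵀ = 1)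
    (hHstep : ∀ t : ℕ, Hseq (t + 1) * (Hseq (t + 1))ᵀ = 1 ∧
      ∀ H : Matrix (Fin k) (Fin n) ℝ, H * Hᵀ = 1 →
        fObj X W M C lam lamZ lamM a1 a2 (Aseq t) (Zseq t) (Hseq (t + 1))
          ≤ fObj X W M C lam lamZ lamM a1 a2 (Aseq t) (Zseq t) H)
    (hAstep : ∀ (t : ℕ) (A : Matrix (Fin n) (Fin n) ℝ),
      fObj X W M C lam lamZ lamM a1 a2 (Aseq (t + 1)) (Zseq t) (Hseq (t + 1))
        ≤ fObj X W M C lam lamZ lamM a1 a2 A (Zseq t) (Hseq (t + 1)))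
    (hZstep : ∀ t : ℕ, (∀ i, Zseq (t + 1) i i = 0) ∧
      ∀ Z : Matrix (Fin n) (Fin n) ℝ, (∀ i, Z i i = 0) →
        fObj X W M C lam lamZ lamM a1 a2 (Aseq (t + 1)) (Zseq (t + 1)) (Hseq (t + 1))
          ≤ fObj X W M C lam lamZ lamM a1 a2 (Aseq (t + 1)) Z (Hseq (t + 1))) :
    Tendsto (fun t : ℕ => frob (Aseq (t + 1) - Aseq t)) atTop (𝓝 0) ∧
    Tendsto (fun t : ℕ => frob (Zseq (t + 1) - Zseq t)) atTop (𝓝 0) :=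
  dgsl_successive_differences_tendsto_zero_general n k d X W M C lam lamZ lamM a1 a2 hlam hlamZ
    hlamM ha1 ha2 Aseq Zseq Hseq hZ0 hHstep hAstep hZstep
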